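/- Let r > 0 and n ≥ 1. Let Z be a compact (r,n)-stacked space over X_1,…,X_n with pieces Z_1,…,Z_n, and W a compact (r,n)-stacked space over Y_1,…,Y_n with pieces W_1,…,W_n, where all X_k and Y_k are nonempty compact metric spaces of diameter at most r. Let R be a correspondence between Z and W with distortion dis(R) < 2r. Then there exists a permutation σ of {1,…,n} such that R[Z_k] ⊆ W_{σ(k)} and R⁻¹[W_k] ⊆ Z_{σ⁻¹(k)} for every k ∈ {1,…,n}. -/

import Mathlib

open GromovHausdorff

universe u v w

/-- `Z` (with two distinguished points `p true = p¹` and `p false = p⁻¹`, and pieces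
`P 0, …, P (n-1)`, where `P k` plays the role of `Z_{k+1}`) is an `(r,n)`-stacked space
over the nonempty compact metric spaces `X 0, …, X (n-1)` (each of diameter at most `r`):
* `dist p¹ p⁻¹ = 3r`;
* the pieces are pairwise disjoint and do not contain `p¹`, `p⁻¹`;
* `{p¹, p⁻¹}` together with the pieces cover `Z`;
* the piece `P k` with the induced metric is isometric to `X k`;
* `dist (p^s) z = 5r(k+1)` for every `z ∈ P k` and both `s`;
* `dist z w = 5r|k - l|` for `z ∈ P k`, `w ∈ P l` with `k ≠ l`. -/
def IsStackedSpace (r : ℝ) {n : ℕ} (X : Fin n → Type u) [∀ k, MetricSpace (X k)]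
    (Z : Type v) [MetricSpace Z] (p : Bool → Z) (P : Fin n → Set Z) : Prop :=
  dist (p true) (p false) = 3 * r ∧
  (Pairwise fun k l : Fin n => Disjoint (P k) (P l)) ∧
  (∀ (k : Fin n) (s : Bool), p s ∉ P k) ∧
  ({p true, p false} ∪ ⋃ k, P k) = Set.univ ∧
  (∀ k : Fin n, Nonempty (X k ≃ᵢ (P k : Set Z))) ∧
  (∀ (k : Fin n) (s : Bool), ∀ z ∈ P k, dist (p s) z = 5 * r * ((k : ℕ) + 1)) ∧
  (∀ k l : Fin n, k ≠ l → ∀ z ∈ P k, ∀ w ∈ P l,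
    dist z w = 5 * r * |((k : ℕ) : ℝ) - ((l : ℕ) : ℝ)|)

/-- `R ⊆ Z × W` is a correspondence: both projections are surjective onto `Z` and `W`. -/
def IsCorrespondence {Z : Type v} {W : Type w} (R : Set (Z × W)) : Prop :=
  (∀ z : Z, ∃ w : W, (z, w) ∈ R) ∧ (∀ w : W, ∃ z : Z, (z, w) ∈ R)

/-- The distortion of a relation `R ⊆ Z × W`:
`dis R = sup {|d_Z(x, ξ) - d_W(y, η)| : (x, y), (ξ, η) ∈ R}`. -/
noncomputable def distortion {Z : Type v} {W : Type w} [MetricSpace Z] [MetricSpace W]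
    (R : Set (Z × W)) : ℝ :=
  sSup {t : ℝ | ∃ a ∈ R, ∃ b ∈ R, t = |dist a.1 b.1 - dist a.2 b.2|}

/-!
A point of a piece is within `r` of the points of its own piece and at least `5r` away from
every other point, while the base points are `3r` apart. So a relation of distortion `< 2r`
that is defined on all of `Z` must send base points to base points. A point of `Z_k` is at
distance `5r(k+1)` from `p¹`, so its partner is within `2r` of that distance from a base point
of `W`, which forces it into `W_k`: the permutation is the identity. The distortion is a genuine
supremum (not the junk value of `sSup`) because a stacked space is bounded by its structure.
-/

open Bornology Metric Set

theorem Nat.one_le_abs_cast_sub_cast {α : Type*} [Ring α] [LinearOrder α]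
    [IsStrictOrderedRing α] {a b : ℕ} (h : a ≠ b) : (1 : α) ≤ |(a : α) - b| := by
  have : (a : ℤ) - b ≠ 0 := sub_ne_zero.mpr (by exact_mod_cast h)
  exact_mod_cast Int.one_le_abs this

theorem abs_dist_sub_dist_le_distortion {Z W : Type*} [MetricSpace Z] [MetricSpace W]
    (hZ : IsBounded (univ : Set Z)) (hW : IsBounded (univ : Set W)) {R : Set (Z × W)}
    {a b : Z × W} (ha : a ∈ R) (hb : b ∈ R) :
    |dist a.1 b.1 - dist a.2 b.2| ≤ distortion R := by
  refine le_csSup ⟨diam (univ : Set Z) + diam (univ : Set W), ?_⟩ ⟨a, ha, b, hb, rfl⟩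
  rintro _ ⟨x, -, y, -, rfl⟩
  have hx := dist_le_diam_of_mem hZ (mem_univ x.1) (mem_univ y.1)
  have hy := dist_le_diam_of_mem hW (mem_univ x.2) (mem_univ y.2)
  rw [abs_le]
  constructor <;> linarith [dist_nonneg (x := x.1) (y := y.1), dist_nonneg (x := x.2) (y := y.2)]

namespace IsStackedSpace

variable {r : ℝ} {n : ℕ} {X : Fin n → Type*} [∀ k, MetricSpace (X k)]
  {Z : Type*} [MetricSpace Z] {p : Bool → Z} {P : Fin n → Set Z}

theorem nonneg (h : IsStackedSpace r X Z p P) : 0 ≤ r := by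
  linarith [h.1 ▸ dist_nonneg (x := p true) (y := p false)]

theorem dist_base_of_mem_piece (h : IsStackedSpace r X Z p P) (s : Bool) {k : Fin n} {z : Z}
    (hz : z ∈ P k) : dist (p s) z = 5 * r * ((k : ℕ) + 1) :=
  h.2.2.2.2.2.1 k s z hz

theorem eq_base_or_mem_piece (h : IsStackedSpace r X Z p P) (z : Z) :
    (∃ s, z = p s) ∨ ∃ k, z ∈ P k := by
  have hz : z ∈ ({p true, p false} ∪ ⋃ k, P k) := h.2.2.2.1 ▸ mem_univ z
  simp only [mem_union, mem_insert_iff, mem_singleton_iff, mem_iUnion] at hz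
  rcases hz with (hz | hz) | hz
  exacts [.inl ⟨true, hz⟩, .inl ⟨false, hz⟩, .inr hz]

theorem dist_base_not (h : IsStackedSpace r X Z p P) (s : Bool) :
    dist (p s) (p !s) = 3 * r := by
  cases s
  · rw [dist_comm]; exact h.1
  · exact h.1

theorem dist_base_le (h : IsStackedSpace r X Z p P) (s t : Bool) : dist (p s) (p t) ≤ 3 * r := by
  have := h.nonneg
  cases s <;> cases t <;> simp [h.1, dist_comm (p false), this]

theorem isBounded_univ (h : IsStackedSpace r X Z p P) : IsBounded (univ : Set Z) := by
  rw [← h.2.2.2.1]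
  refine (toFinite _).isBounded.union (isBounded_iUnion.2 fun k => ?_)
  refine (isBounded_closedBall (x := p true) (r := 5 * r * ((k : ℕ) + 1))).subset fun z hz => ?_
  rw [mem_closedBall, dist_comm, h.dist_base_of_mem_piece true hz]

theorem dist_le_of_mem_piece (h : IsStackedSpace r X Z p P) {k : Fin n}
    (hd : diam (univ : Set (X k)) ≤ r) {z w : Z} (hz : z ∈ P k) (hw : w ∈ P k) :
    dist z w ≤ r := by
  obtain ⟨e⟩ := h.2.2.2.2.1 k
  have hdiam : diam (P k) = diam (univ : Set (X k)) := by
    rw [← (isometry_subtype_coe.comp e.isometry).diam_range, range_comp, e.surjective.range_eq,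
      image_univ, Subtype.range_coe]
  exact (dist_le_diam_of_mem (h.isBounded_univ.subset (subset_univ _)) hz hw).trans (hdiam ▸ hd)

theorem dist_le_or_five_mul_le_dist (h : IsStackedSpace r X Z p P)
    (hd : ∀ k, diam (univ : Set (X k)) ≤ r) {k : Fin n} {z : Z} (hz : z ∈ P k) (w : Z) :
    dist z w ≤ r ∨ 5 * r ≤ dist z w := by
  have hr := h.nonneg
  rcases h.eq_base_or_mem_piece w with ⟨s, rfl⟩ | ⟨l, hl⟩
  · rw [dist_comm, h.dist_base_of_mem_piece s hz]
    right; nlinarith [(k : ℕ).cast_nonneg (α := ℝ)]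
  · by_cases hkl : k = l
    · exact .inl (h.dist_le_of_mem_piece (hd k) hz (hkl ▸ hl))
    · rw [h.2.2.2.2.2.2 k l hkl z hz w hl]
      right; nlinarith [Nat.one_le_abs_cast_sub_cast (α := ℝ) (Fin.val_ne_of_ne hkl)]

end IsStackedSpace

section Relation

variable {r : ℝ} {n : ℕ} {X Y : Fin n → Type*} [∀ k, MetricSpace (X k)]
  [∀ k, MetricSpace (Y k)] {Z W : Type*} [MetricSpace Z] [MetricSpace W]
  {p : Bool → Z} {P : Fin n → Set Z} {q : Bool → W} {Q : Fin n → Set W} {S : Set (Z × W)}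

theorem IsStackedSpace.exists_eq_base_of_base_mem_rel (hZ : IsStackedSpace r X Z p P)
    (hW : IsStackedSpace r Y W q Q) (hdY : ∀ k, diam (univ : Set (Y k)) ≤ r)
    (hS : ∀ z, ∃ w, (z, w) ∈ S)
    (hdis : ∀ a ∈ S, ∀ b ∈ S, |dist a.1 b.1 - dist a.2 b.2| < 2 * r)
    {s : Bool} {w : W} (hw : (p s, w) ∈ S) : ∃ t, w = q t := by
  obtain ⟨w', hw'⟩ := hS (p !s)
  have hclose := hdis _ hw _ hw'
  rw [hZ.dist_base_not, abs_lt] at hclose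
  refine (hW.eq_base_or_mem_piece w).resolve_right fun ⟨l, hl⟩ => ?_
  rcases hW.dist_le_or_five_mul_le_dist hdY hl w' with h | h <;> dsimp only at hclose <;> linarith

theorem IsStackedSpace.mem_piece_of_mem_rel (hZ : IsStackedSpace r X Z p P)
    (hW : IsStackedSpace r Y W q Q) (hdY : ∀ k, diam (univ : Set (Y k)) ≤ r)
    (hS : ∀ z, ∃ w, (z, w) ∈ S)
    (hdis : ∀ a ∈ S, ∀ b ∈ S, |dist a.1 b.1 - dist a.2 b.2| < 2 * r)
    {k : Fin n} {z : Z} {w : W} (hz : z ∈ P k) (hzw : (z, w) ∈ S) : w ∈ Q k := by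
  have hr := hZ.nonneg
  have hk := (k : ℕ).cast_nonneg (α := ℝ)
  obtain ⟨w₀, hw₀⟩ := hS (p true)
  obtain ⟨t, rfl⟩ := hZ.exists_eq_base_of_base_mem_rel hW hdY hS hdis hw₀
  have hclose := hdis _ hw₀ _ hzw
  dsimp only at hclose
  rw [hZ.dist_base_of_mem_piece true hz, abs_lt] at hclose
  rcases hW.eq_base_or_mem_piece w with ⟨t', rfl⟩ | ⟨l, hl⟩
  · nlinarith [hW.dist_base_le t t']
  · obtain rfl | hkl := eq_or_ne k l
    · exact hl
    rw [hW.dist_base_of_mem_piece t hl] at hclose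
    have hkl' := Nat.one_le_abs_cast_sub_cast (α := ℝ) (Fin.val_ne_of_ne hkl)
    rcases le_abs.mp hkl' with h | h <;> nlinarith

end Relation

theorem stackedSpace_corr_pieces_perm_general (r : ℝ) (n : ℕ)
    (X Y : Fin n → Type u)
    [∀ k, MetricSpace (X k)]
    [∀ k, MetricSpace (Y k)]
    (hdX : ∀ k, Metric.diam (Set.univ : Set (X k)) ≤ r)
    (hdY : ∀ k, Metric.diam (Set.univ : Set (Y k)) ≤ r)
    (Z : Type v) [MetricSpace Z]
    (W : Type w) [MetricSpace W]
    (p : Bool → Z) (P : Fin n → Set Z) (hZ : IsStackedSpace r X Z p P)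
    (q : Bool → W) (Q : Fin n → Set W) (hW : IsStackedSpace r Y W q Q)
    (R : Set (Z × W)) (hR : IsCorrespondence R) (hdis : distortion R < 2 * r) :
    ∃ σ : Equiv.Perm (Fin n), ∀ k : Fin n,
      {w : W | ∃ z ∈ P k, (z, w) ∈ R} ⊆ Q (σ k) ∧
      {z : Z | ∃ w ∈ Q k, (z, w) ∈ R} ⊆ P (σ⁻¹ k) := by
  have hR_dis : ∀ a ∈ R, ∀ b ∈ R, |dist a.1 b.1 - dist a.2 b.2| < 2 * r := fun a ha b hb =>
    (abs_dist_sub_dist_le_distortion hZ.isBounded_univ hW.isBounded_univ ha hb).trans_lt hdis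
  have hR_symm_dis : ∀ a ∈ Prod.swap ⁻¹' R, ∀ b ∈ Prod.swap ⁻¹' R,
      |dist a.1 b.1 - dist a.2 b.2| < 2 * r := fun a ha b hb => by
    rw [abs_sub_comm]
    exact hR_dis _ ha _ hb
  refine ⟨1, fun k => ⟨?_, ?_⟩⟩
  · rintro w ⟨z, hz, hzw⟩
    exact hZ.mem_piece_of_mem_rel hW hdY hR.1 hR_dis hz hzw
  · rintro z ⟨w, hw, hzw⟩
    exact hW.mem_piece_of_mem_rel hZ hdX hR.2 hR_symm_dis hw hzw

/-- Let `Z`, `W` be compact `(r,n)`-stacked spaces over the `X k` and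
`Y k`, with pieces `P k` and `Q k` respectively, and let `R` be a correspondence between
`Z` and `W` with `dis R < 2r`. Then there is a permutation `σ` of `{1,…,n}` (here of
`Fin n`) with `R[P k] ⊆ Q (σ k)` and `R⁻¹[Q k] ⊆ P (σ⁻¹ k)` for every `k`. -/
theorem stackedSpace_corr_pieces_perm (r : ℝ) (hr : 0 < r) (n : ℕ) (hn : 1 ≤ n)
    (X Y : Fin n → Type u)
    [∀ k, MetricSpace (X k)] [∀ k, CompactSpace (X k)] [∀ k, Nonempty (X k)]
    [∀ k, MetricSpace (Y k)] [∀ k, CompactSpace (Y k)] [∀ k, Nonempty (Y k)]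
    (hdX : ∀ k, Metric.diam (Set.univ : Set (X k)) ≤ r)
    (hdY : ∀ k, Metric.diam (Set.univ : Set (Y k)) ≤ r)
    (Z : Type v) [MetricSpace Z] [CompactSpace Z]
    (W : Type w) [MetricSpace W] [CompactSpace W]
    (p : Bool → Z) (P : Fin n → Set Z) (hZ : IsStackedSpace r X Z p P)
    (q : Bool → W) (Q : Fin n → Set W) (hW : IsStackedSpace r Y W q Q)
    (R : Set (Z × W)) (hR : IsCorrespondence R) (hdis : distortion R < 2 * r) :
    ∃ σ : Equiv.Perm (Fin n), ∀ k : Fin n,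
      {w : W | ∃ z ∈ P k, (z, w) ∈ R} ⊆ Q (σ k) ∧
      {z : Z | ∃ w ∈ Q k, (z, w) ∈ R} ⊆ P (σ⁻¹ k) :=
  stackedSpace_corr_pieces_perm_general r n X Y hdX hdY Z W p P hZ q Q hW R hR hdis
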